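/- arXiv:1903.01073 — 3 statements merged into one kernel-verified Lean document; each statement's English description precedes it below -/
import Mathlib

section
/- Upper bound on the algebraic connectivity of the multiplex by the budget: for every w ∈ ℝ^N with w_i ≥ 0 for all i and Σ_{i=1}^N w_i = c, the second smallest eigenvalue satisfies λ2(L(w)) ≤ 2c/N. (The bound follows from the Rayleigh quotient of the test vector (e; −e), which is orthogonal to the all-ones vector.) -/
open Matrix

/-- Eigenvalues of a real symmetric matrix, listed in nondecreasing order with multiplicity
(junk value `0` if the matrix is not Hermitian). -/
noncomputable def sortedEigs {m : ℕ} (A : Matrix (Fin m) (Fin m) ℝ) : Fin m → ℝ :=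
  if hA : A.IsHermitian then fun k => hA.eigenvalues (Tuple.sort hA.eigenvalues k) else 0

/-- The supra-Laplacian `L(w) = [[L1 + W, -W], [-W, L2 + W]]` of a two-layer multiplex,
as a matrix indexed by `Fin (N + N)`. -/
noncomputable def supraLap {N : ℕ} (L1 L2 : Matrix (Fin N) (Fin N) ℝ) (w : Fin N → ℝ) :
    Matrix (Fin (N + N)) (Fin (N + N)) ℝ :=
  Matrix.reindex finSumFinEquiv finSumFinEquiv
    (Matrix.fromBlocks (L1 + Matrix.diagonal w) (-(Matrix.diagonal w))
      (-(Matrix.diagonal w)) (L2 + Matrix.diagonal w))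

local notation "⟪" x ", " y "⟫" => @inner ℝ _ _ x y

lemma sorted_one_le {n : ℕ} (hn : 1 < n) (f : Fin n → ℝ) {r : ℝ} {i j : Fin n}
    (hij : i ≠ j) (hi : f i ≤ r) (hj : f j ≤ r) :
    f (Tuple.sort f ⟨1, hn⟩) ≤ r := by
  set σ := Tuple.sort f with hσ
  have mono : Monotone (f ∘ σ) := Tuple.monotone_sort f
  have hne : σ.symm i ≠ σ.symm j := fun h => hij (by
    have := congrArg σ h; simpa using this)
  rcases lt_or_gt_of_ne hne with h | h
  · have h1 : (⟨1, hn⟩ : Fin n) ≤ σ.symm j := by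
      have : (σ.symm i : ℕ) < (σ.symm j : ℕ) := h
      exact Fin.mk_le_of_le_val (by omega)
    have := mono h1
    simp only [Function.comp_apply, Equiv.apply_symm_apply] at this
    exact le_trans this hj
  · have h1 : (⟨1, hn⟩ : Fin n) ≤ σ.symm i := by
      have : (σ.symm j : ℕ) < (σ.symm i : ℕ) := h
      exact Fin.mk_le_of_le_val (by omega)
    have := mono h1
    simp only [Function.comp_apply, Equiv.apply_symm_apply] at this
    exact le_trans this hi

lemma repr_mulVec {n : ℕ} {A : Matrix (Fin n) (Fin n) ℝ} (hA : A.IsHermitian)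
    (x : EuclideanSpace ℝ (Fin n)) (j : Fin n) :
    hA.eigenvectorBasis.repr (Matrix.toEuclideanLin A x) j
      = hA.eigenvalues j * hA.eigenvectorBasis.repr x j := by
  set b := hA.eigenvectorBasis
  have h1 : ∀ y : EuclideanSpace ℝ (Fin n), b.repr y j = ⟪b j, y⟫ :=
    fun y => b.repr_apply_apply y j
  rw [h1, h1]
  simp only [PiLp.inner_apply, RCLike.inner_apply, conj_trivial]
  show (A *ᵥ x.ofLp) ⬝ᵥ (⇑(b j)) = hA.eigenvalues j * (x.ofLp ⬝ᵥ (⇑(b j)))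
  rw [dotProduct_comm _ (⇑(b j)), dotProduct_comm x.ofLp]
  have hvm : (⇑(b j)) ᵥ* A = A *ᵥ (⇑(b j)) := by
    rw [← mulVec_transpose, ← conjTranspose_eq_transpose_of_trivial, hA]
  rw [dotProduct_mulVec, hvm, hA.mulVec_eigenvectorBasis, smul_dotProduct]
  simp [smul_eq_mul, b]

lemma inner_toEuclideanLin_eq_sum {n : ℕ} {A : Matrix (Fin n) (Fin n) ℝ} (hA : A.IsHermitian)
    (x : EuclideanSpace ℝ (Fin n)) :
    ⟪x, Matrix.toEuclideanLin A x⟫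
      = ∑ j, hA.eigenvalues j * (hA.eigenvectorBasis.repr x j) ^ 2 := by
  set b := hA.eigenvectorBasis
  rw [← b.repr.inner_map_map x (Matrix.toEuclideanLin A x)]
  simp only [PiLp.inner_apply, RCLike.inner_apply, conj_trivial]
  refine Finset.sum_congr rfl fun j _ => ?_
  rw [repr_mulVec hA x j]; ring

lemma inner_self_eq_sum {n : ℕ} {A : Matrix (Fin n) (Fin n) ℝ} (hA : A.IsHermitian)
    (x : EuclideanSpace ℝ (Fin n)) :
    ⟪x, x⟫ = ∑ j, (hA.eigenvectorBasis.repr x j) ^ 2 := by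
  rw [← hA.eigenvectorBasis.repr.inner_map_map x x]
  simp only [PiLp.inner_apply, RCLike.inner_apply, conj_trivial]
  exact Finset.sum_congr rfl fun j _ => (sq _).symm

set_option maxHeartbeats 1600000

/-- Upper bound on the algebraic connectivity of the multiplex by the budget:
`λ₂(L(w)) ≤ 2c/N` whenever `w ≥ 0` and `∑ wᵢ = c`. -/
theorem stmt1 (N : ℕ) (hN : 1 ≤ N)
    (L1 L2 : Matrix (Fin N) (Fin N) ℝ)
    (hL1 : L1.PosSemidef) (hL2 : L2.PosSemidef)
    (hL1e : L1 *ᵥ (fun _ => (1 : ℝ)) = 0) (hL2e : L2 *ᵥ (fun _ => (1 : ℝ)) = 0)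
    (c : ℝ) (w : Fin N → ℝ) (hw : ∀ i, 0 ≤ w i) (hsum : ∑ i, w i = c) :
    sortedEigs (supraLap L1 L2 w) ⟨1, by omega⟩ ≤ 2 * c / (N : ℝ) := by
  classical
  have hN' : (0 : ℝ) < N := by exact_mod_cast hN
  have hc : 0 ≤ c := hsum ▸ Finset.sum_nonneg fun i _ => hw i
  set r : ℝ := 2 * c / N with hr
  set A := supraLap L1 L2 w with hAdef
  have hA : A.IsHermitian := by
    rw [hAdef, supraLap, reindex_apply]
    exact (isHermitian_fromBlocks_iff.2
      ⟨(hL1.1).add (isHermitian_diagonal w), ((isHermitian_diagonal w).neg : _),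
        ((isHermitian_diagonal w).neg : _), (hL2.1).add (isHermitian_diagonal w)⟩).submatrix _
  have hn : 1 < N + N := by omega
  rw [sortedEigs, dif_pos hA]
  set μ := hA.eigenvalues with hμ
  set b := hA.eigenvectorBasis with hb
  by_contra hcon
  push_neg at hcon
  have honele : ∀ i j : Fin (N + N), μ i ≤ r → μ j ≤ r → i = j := by
    intro i j hi hj
    by_contra hij
    exact absurd (sorted_one_le hn μ hij hi hj) (not_le.2 hcon)
  -- the test vectors
  set evf : Fin (N + N) → ℝ := fun _ => 1 with hevf
  set vvf : Fin (N + N) → ℝ :=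
    (Sum.elim (fun _ => (1 : ℝ)) (fun _ => (-1 : ℝ))) ∘ ⇑finSumFinEquiv.symm with hvvf
  set ev : EuclideanSpace ℝ (Fin (N + N)) := (WithLp.equiv 2 _).symm evf with hev
  set vv : EuclideanSpace ℝ (Fin (N + N)) := (WithLp.equiv 2 _).symm vvf with hvv
  -- mulVec computations
  have hmul : ∀ x : Fin (N + N) → ℝ, A *ᵥ x =
      ((fromBlocks (L1 + diagonal w) (-(diagonal w)) (-(diagonal w)) (L2 + diagonal w)) *ᵥ
        (x ∘ ⇑finSumFinEquiv)) ∘ ⇑finSumFinEquiv.symm := by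
    intro x
    rw [hAdef, supraLap, reindex_apply, submatrix_mulVec_equiv]
    simp
  set u1 : Fin N ⊕ Fin N → ℝ := Sum.elim (fun _ => (1:ℝ)) (fun _ => (1:ℝ)) with hu1
  set uv : Fin N ⊕ Fin N → ℝ := Sum.elim (fun _ => (1:ℝ)) (fun _ => (-1:ℝ)) with huv
  have hu1l : u1 ∘ Sum.inl = fun _ => (1:ℝ) := rfl
  have hu1r : u1 ∘ Sum.inr = fun _ => (1:ℝ) := rfl
  have huvl : uv ∘ Sum.inl = fun _ => (1:ℝ) := rfl
  have huvr : uv ∘ Sum.inr = -(fun _ => (1:ℝ)) := rfl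
  have hAe : A *ᵥ evf = 0 := by
    rw [hmul]
    have h1 : evf ∘ ⇑finSumFinEquiv = u1 := by
      funext k; rw [hu1]; cases k <;> rfl
    rw [h1, fromBlocks_mulVec, hu1l, hu1r]
    have h4 : Sum.elim
        ((L1 + diagonal w) *ᵥ (fun _ => (1:ℝ)) + (-(diagonal w)) *ᵥ (fun _ => (1:ℝ)))
        ((-(diagonal w)) *ᵥ (fun _ => (1:ℝ)) + (L2 + diagonal w) *ᵥ (fun _ => (1:ℝ)))
        = (0 : Fin N ⊕ Fin N → ℝ) := by
      funext k
      cases k <;> simp [add_mulVec, neg_mulVec, hL1e, hL2e, mulVec_diagonal]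
    rw [h4]
    funext j; simp
  have hAv : A *ᵥ vvf
      = (Sum.elim (fun i => 2 * w i) (fun i => -(2 * w i))) ∘ ⇑finSumFinEquiv.symm := by
    rw [hmul]
    have h1 : vvf ∘ ⇑finSumFinEquiv = uv := by
      funext k; rw [hvvf]; simp only [Function.comp_apply, Equiv.symm_apply_apply]
    rw [h1, fromBlocks_mulVec, huvl, huvr]
    have h4 : Sum.elim
        ((L1 + diagonal w) *ᵥ (fun _ => (1:ℝ)) + (-(diagonal w)) *ᵥ (-(fun _ => (1:ℝ))))
        ((-(diagonal w)) *ᵥ (fun _ => (1:ℝ)) + (L2 + diagonal w) *ᵥ (-(fun _ => (1:ℝ))))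
        = Sum.elim (fun i => 2 * w i) (fun i => -(2 * w i)) := by
      funext k
      cases k <;>
        simp [add_mulVec, neg_mulVec, mulVec_neg, hL1e, hL2e, mulVec_diagonal] <;> ring
    rw [h4]
  -- sums over the two halves
  have hsumeq : ∀ F : Fin (N + N) → ℝ,
      ∑ j, F j = (∑ i, F (finSumFinEquiv (Sum.inl i))) + (∑ i, F (finSumFinEquiv (Sum.inr i))) := by
    intro F
    rw [← Equiv.sum_comp finSumFinEquiv F, Fintype.sum_sum_type]
  have hvv_inl : ∀ i : Fin N, vvf (finSumFinEquiv (Sum.inl i)) = 1 := by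
    intro i; rw [hvvf]
    simp only [Function.comp_apply, Equiv.symm_apply_apply, huv, Sum.elim_inl]
  have hvv_inr : ∀ i : Fin N, vvf (finSumFinEquiv (Sum.inr i)) = -1 := by
    intro i; rw [hvvf]
    simp only [Function.comp_apply, Equiv.symm_apply_apply, huv, Sum.elim_inr]
  have hAvv_inl : ∀ i : Fin N, (A *ᵥ vvf) (finSumFinEquiv (Sum.inl i)) = 2 * w i := by
    intro i; rw [hAv]
    simp only [Function.comp_apply, Equiv.symm_apply_apply, Sum.elim_inl]
  have hAvv_inr : ∀ i : Fin N, (A *ᵥ vvf) (finSumFinEquiv (Sum.inr i)) = -(2 * w i) := by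
    intro i; rw [hAv]
    simp only [Function.comp_apply, Equiv.symm_apply_apply, Sum.elim_inr]
  -- inner product values
  have d1 : ⟪ev, ev⟫ = (N : ℝ) + N := by
    rw [hev]
    simp only [PiLp.inner_apply, RCLike.inner_apply, conj_trivial, WithLp.equiv_symm_apply, PiLp.toLp_apply]
    rw [hsumeq]
    simp [hevf]
  have d2 : ⟪vv, vv⟫ = (N : ℝ) + N := by
    rw [hvv]
    simp only [PiLp.inner_apply, RCLike.inner_apply, conj_trivial, WithLp.equiv_symm_apply, PiLp.toLp_apply]
    rw [hsumeq (fun j => vvf j * vvf j)]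
    simp only [hvv_inl, hvv_inr]
    simp
  have d3 : ⟪ev, vv⟫ = 0 := by
    rw [hev, hvv]
    simp only [PiLp.inner_apply, RCLike.inner_apply, conj_trivial, WithLp.equiv_symm_apply, PiLp.toLp_apply]
    rw [hsumeq (fun j => vvf j * evf j)]
    simp only [hvv_inl, hvv_inr, hevf]
    simp
  set f : EuclideanSpace ℝ (Fin (N + N)) →ₗ[ℝ] EuclideanSpace ℝ (Fin (N + N)) :=
    Matrix.toEuclideanLin A with hf
  have hfe : f ev = 0 := by
    rw [hf, hev, WithLp.equiv_symm_apply, Matrix.toEuclideanLin_apply_piLp_toLp, hAe]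
    simp
  have hfv : f vv = (WithLp.equiv 2 _).symm (A *ᵥ vvf) := by
    rw [hf, hvv, WithLp.equiv_symm_apply, Matrix.toEuclideanLin_apply_piLp_toLp]
  have d4 : ⟪ev, f vv⟫ = 0 := by
    rw [hfv, hev]
    simp only [PiLp.inner_apply, RCLike.inner_apply, conj_trivial, WithLp.equiv_symm_apply, PiLp.toLp_apply]
    rw [hsumeq (fun j => (A *ᵥ vvf) j * evf j)]
    simp only [hAvv_inl, hAvv_inr, hevf, mul_one]
    rw [← Finset.sum_add_distrib]
    simp
  have d5 : ⟪vv, f vv⟫ = 4 * c := by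
    rw [hfv, hvv]
    simp only [PiLp.inner_apply, RCLike.inner_apply, conj_trivial, WithLp.equiv_symm_apply, PiLp.toLp_apply]
    rw [hsumeq (fun j => (A *ᵥ vvf) j * vvf j)]
    simp only [hAvv_inl, hAvv_inr, hvv_inl, hvv_inr]
    rw [← hsum, ← Finset.sum_add_distrib, Finset.mul_sum]
    exact Finset.sum_congr rfl fun i _ => by ring
  -- the 2-dimensional test subspace
  set S : Submodule ℝ (EuclideanSpace ℝ (Fin (N + N))) :=
    Submodule.span ℝ {ev, vv} with hS
  have hSle : ∀ x ∈ S, ⟪x, f x⟫ ≤ r * ⟪x, x⟫ := by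
    intro x hx
    obtain ⟨a, β, hx⟩ := Submodule.mem_span_pair.1 hx
    subst hx
    have hfx : f (a • ev + β • vv) = β • f vv := by
      rw [f.map_add, f.map_smul, f.map_smul, hfe, smul_zero, zero_add]
    have d3' : ⟪vv, ev⟫ = 0 := by rw [real_inner_comm]; exact d3
    have lhs : ⟪a • ev + β • vv, f (a • ev + β • vv)⟫ = β * β * (4 * c) := by
      rw [hfx]
      simp only [inner_add_left, real_inner_smul_left, real_inner_smul_right, d4, d5]
      ring
    have rhs : ⟪a • ev + β • vv, a • ev + β • vv⟫
        = (a * a + β * β) * ((N:ℝ) + N) := by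
      simp only [inner_add_left, inner_add_right, real_inner_smul_left,
        real_inner_smul_right, d1, d2, d3, d3']
      ring
    rw [lhs, rhs]
    have hkey : r * ((N:ℝ) + N) = 4 * c := by
      rw [hr]; field_simp; ring
    have step : β * β * (4 * c) ≤ (a * a + β * β) * (4 * c) := by
      nlinarith [mul_nonneg (mul_self_nonneg a) hc]
    calc β * β * (4 * c) ≤ (a * a + β * β) * (4 * c) := step
      _ = r * ((a * a + β * β) * ((N:ℝ) + N)) := by rw [← hkey]; ring
  -- the eigenvector subspace for eigenvalues > r
  set s : Finset (Fin (N + N)) := Finset.univ.filter (fun i => r < μ i) with hsdef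
  set T : Submodule ℝ (EuclideanSpace ℝ (Fin (N + N))) :=
    Submodule.span ℝ (Set.range (fun i : {i // i ∈ s} => b i)) with hT
  have hli : LinearIndependent ℝ (fun i : {i // i ∈ s} => b (i : Fin (N + N))) :=
    (b.orthonormal.linearIndependent).comp _ Subtype.val_injective
  have hTrank : Module.finrank ℝ T = s.card := by
    rw [hT, finrank_span_eq_card hli, Fintype.card_coe]
  have hTmem : ∀ x ∈ T, ∀ j, j ∉ s → b.repr x j = 0 := by
    intro x hx j hj
    rw [b.repr_apply_apply]
    have hle : T ≤ LinearMap.ker ((innerSL ℝ (b j)).toLinearMap) := by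
      rw [hT, Submodule.span_le]
      rintro _ ⟨i, rfl⟩
      simp only [SetLike.mem_coe, LinearMap.mem_ker, ContinuousLinearMap.coe_coe, innerSL_apply_apply]
      exact b.orthonormal.2 (fun h => hj (by rw [h]; exact i.2))
    simpa using hle hx
  have hTgt : ∀ x ∈ T, x ≠ 0 → r * ⟪x, x⟫ < ⟪x, f x⟫ := by
    intro x hxT hx0
    have key : 0 < ∑ j, (μ j - r) * (b.repr x j) ^ 2 := by
      obtain ⟨j0, hj0⟩ : ∃ j, b.repr x j ≠ 0 := by
        by_contra hall
        push_neg at hall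
        exact hx0 (b.repr.map_eq_zero_iff.1 (by ext j; exact hall j))
      have hj0s : j0 ∈ s := by
        by_contra h
        exact hj0 (hTmem x hxT j0 h)
      refine Finset.sum_pos' (fun j _ => ?_) ⟨j0, Finset.mem_univ _, ?_⟩
      · by_cases hjs : j ∈ s
        · have hrj : r < μ j := (Finset.mem_filter.1 hjs).2
          exact mul_nonneg (sub_nonneg.2 hrj.le) (sq_nonneg _)
        · rw [hTmem x hxT j hjs]
          simp
      · have hrj : r < μ j0 := (Finset.mem_filter.1 hj0s).2
        exact mul_pos (sub_pos.2 hrj) (sq_pos_of_ne_zero hj0)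
    have h1 := inner_toEuclideanLin_eq_sum hA x
    have h2 := inner_self_eq_sum hA x
    rw [← hf] at h1
    rw [h1, h2, Finset.mul_sum]
    have h3 : ∑ j, (μ j - r) * (b.repr x j) ^ 2
        = ∑ j, μ j * (b.repr x j) ^ 2 - ∑ j, r * (b.repr x j) ^ 2 := by
      rw [← Finset.sum_sub_distrib]
      exact Finset.sum_congr rfl fun j _ => by ring
    rw [h3] at key
    linarith
  -- dimension count
  have hSrank : Module.finrank ℝ S = 2 := by
    have hind : LinearIndependent ℝ ![ev, vv] := by
      rw [linearIndependent_fin2]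
      simp only [Matrix.cons_val_one, Matrix.head_cons, Matrix.cons_val_zero]
      constructor
      · intro h
        have h0 := d2
        rw [h, inner_zero_left] at h0
        have : (0:ℝ) < (N:ℝ) + N := by linarith
        linarith
      · intro a h
        have h0 := congrArg (fun y => ⟪ev, y⟫) h
        simp only [real_inner_smul_right, d3, d1, mul_zero] at h0
        have : (0:ℝ) < (N:ℝ) + N := by linarith
        linarith
    have hrange : Set.range ![ev, vv] = {ev, vv} := by
      simp [Matrix.range_cons, Matrix.range_empty, Set.pair_comm]
    rw [hS, ← hrange, finrank_span_eq_card hind]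
    simp
  have hcard : N + N - 1 ≤ s.card := by
    have hsplit := Finset.card_filter_add_card_filter_not
      (s := (Finset.univ : Finset (Fin (N + N)))) (p := fun i => r < μ i)
    have huniv : (Finset.univ : Finset (Fin (N + N))).card = N + N := by
      simp
    have hone : (Finset.univ.filter (fun i => ¬ r < μ i)).card ≤ 1 := by
      apply Finset.card_le_one.2
      intro a ha b hb
      exact honele a b (not_lt.1 (Finset.mem_filter.1 ha).2) (not_lt.1 (Finset.mem_filter.1 hb).2)
    rw [hsdef]
    omega
  have hfinE : Module.finrank ℝ (EuclideanSpace ℝ (Fin (N + N))) = N + N := by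
    simp [finrank_euclideanSpace]
  have hinf : 0 < Module.finrank ℝ ↥(S ⊓ T) := by
    have h1 := Submodule.finrank_sup_add_finrank_inf_eq S T
    have h2 : Module.finrank ℝ ↥(S ⊔ T)
        ≤ Module.finrank ℝ (EuclideanSpace ℝ (Fin (N + N))) :=
      Submodule.finrank_le (S ⊔ T)
    omega
  obtain ⟨x, hx0⟩ := Module.finrank_pos_iff_exists_ne_zero.1 hinf
  have hx0' : (x : EuclideanSpace ℝ (Fin (N + N))) ≠ 0 := fun h => hx0 (Subtype.ext h)
  have hxS : (x : EuclideanSpace ℝ (Fin (N + N))) ∈ S := (Submodule.mem_inf.1 x.2).1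
  have hxT : (x : EuclideanSpace ℝ (Fin (N + N))) ∈ T := (Submodule.mem_inf.1 x.2).2
  linarith [hSle x hxS, hTgt x hxT hx0']
end

section
/- Upper bound on the algebraic connectivity by the average layer Laplacian: for every w ∈ ℝ^N with w_i ≥ 0 for all i, the second smallest eigenvalue of the supra-Laplacian satisfies λ2(L(w)) ≤ λ2(L_ave), where L_ave := (L1 + L2)/2 and λ2(L_ave) denotes the second smallest eigenvalue (with multiplicity) of the N×N matrix L_ave. In particular the optimal algebraic connectivity under any budget never exceeds λ2(L_ave). -/
open Matrix

lemma dot_expand {m : ℕ} (b : OrthonormalBasis (Fin m) ℝ (EuclideanSpace ℝ (Fin m))) (x y : EuclideanSpace ℝ (Fin m)) :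
    (x : Fin m → ℝ) ⬝ᵥ y = ∑ i, (⇑(b i) ⬝ᵥ x) * (⇑(b i) ⬝ᵥ y) := by
  have h := b.sum_inner_mul_inner x y
  simp only [PiLp.inner_apply, RCLike.inner_apply, starRingEnd_apply, star_trivial] at h
  simp only [dotProduct]
  simp only [mul_comm (x.ofLp _) (y.ofLp _)]
  rw [← h]
  refine Finset.sum_congr rfl fun i _ => ?_
  congr 1
  exact Finset.sum_congr rfl fun j _ => mul_comm _ _

lemma quad_expand {m : ℕ} {A : Matrix (Fin m) (Fin m) ℝ} (hA : A.IsHermitian) (x : Fin m → ℝ) :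
    x ⬝ᵥ (A *ᵥ x) = ∑ i, hA.eigenvalues i * (⇑(hA.eigenvectorBasis i) ⬝ᵥ x)^2 := by
  have h := dot_expand hA.eigenvectorBasis (WithLp.toLp 2 x) (WithLp.toLp 2 (A *ᵥ x))
  simp only [WithLp.ofLp_toLp] at h
  rw [h]
  refine Finset.sum_congr rfl fun i _ => ?_
  have hb : ⇑(hA.eigenvectorBasis i) ⬝ᵥ (A *ᵥ x)
      = hA.eigenvalues i * (⇑(hA.eigenvectorBasis i) ⬝ᵥ x) := by
    rw [Matrix.dotProduct_mulVec, ← Matrix.mulVec_transpose]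
    have hAt : Aᵀ = A := by
      have := hA.eq; rwa [Matrix.conjTranspose_eq_transpose_of_trivial] at this
    rw [hAt, hA.mulVec_eigenvectorBasis, smul_dotProduct]
    rfl
  rw [hb]; ring

lemma dot_basis {m : ℕ} (b : OrthonormalBasis (Fin m) ℝ (EuclideanSpace ℝ (Fin m))) (i j : Fin m) :
    ⇑(b i) ⬝ᵥ ⇑(b j) = if i = j then 1 else 0 := by
  have h := orthonormal_iff_ite.mp b.orthonormal i j
  simpa [PiLp.inner_apply, RCLike.inner_apply, starRingEnd_apply, dotProduct, mul_comm] using h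

lemma lemA {m : ℕ} (hm : 2 ≤ m) {A : Matrix (Fin m) (Fin m) ℝ} (hA : A.IsHermitian)
    (hpsd : ∀ i, 0 ≤ hA.eigenvalues i)
    (u : Fin m → ℝ) (hu0 : A *ᵥ u = 0) (hune : u ≠ 0) (x : Fin m → ℝ) (hux : u ⬝ᵥ x = 0) :
    hA.eigenvalues (Tuple.sort hA.eigenvalues ⟨1, Nat.lt_of_lt_of_le one_lt_two hm⟩) * (x ⬝ᵥ x) ≤ x ⬝ᵥ (A *ᵥ x) := by
  set b := hA.eigenvectorBasis with hb
  set f := hA.eigenvalues with hf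
  set σ := Tuple.sort hA.eigenvalues with hσ
  set μ := f (σ ⟨1, Nat.lt_of_lt_of_le one_lt_two hm⟩) with hμ
  set j : Fin m := σ ⟨0, by omega⟩ with hj
  have hmono : Monotone (f ∘ σ) := Tuple.monotone_sort f
  have key : ∀ i : Fin m, i ≠ j → μ ≤ f i := by
    intro i hij
    have hk : σ (σ.symm i) = i := σ.apply_symm_apply i
    have hne0 : σ.symm i ≠ ⟨0, by omega⟩ := fun h => hij (by rw [← hk, h])
    have hk1 : (⟨1, Nat.lt_of_lt_of_le one_lt_two hm⟩ : Fin m) ≤ σ.symm i := by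
      have hv : (σ.symm i).val ≠ 0 := fun h => hne0 (Fin.ext h)
      exact Fin.mk_le_of_le_val (by omega)
    calc μ = (f ∘ σ) ⟨1, Nat.lt_of_lt_of_le one_lt_two hm⟩ := rfl
    _ ≤ (f ∘ σ) (σ.symm i) := hmono hk1
    _ = f i := by simp [hk]
  -- expansion coefficients
  have hxx : x ⬝ᵥ x = ∑ i, (⇑(b i) ⬝ᵥ x)^2 := by
    have := dot_expand b (WithLp.toLp 2 x) (WithLp.toLp 2 x)
    simpa [sq] using this
  have hqx := quad_expand hA x
  have hqu := quad_expand hA u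
  have huAu : u ⬝ᵥ (A *ᵥ u) = 0 := by rw [hu0, dotProduct_zero]
  rw [huAu] at hqu
  -- main case analysis inside per-term bound
  rw [hxx, hqx, Finset.mul_sum]
  refine Finset.sum_le_sum fun i _ => ?_
  rcases le_or_gt μ 0 with hle | hpos
  · calc μ * (⇑(b i) ⬝ᵥ x)^2 ≤ 0 := mul_nonpos_of_nonpos_of_nonneg hle (sq_nonneg _)
    _ ≤ f i * (⇑(b i) ⬝ᵥ x)^2 := mul_nonneg (hpsd i) (sq_nonneg _)
  · by_cases hij : i = j
    · -- show coefficient of x at j vanishes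
      have hzero : ∀ k : Fin m, k ≠ j → ⇑(b k) ⬝ᵥ u = 0 := by
        intro k hkj
        have hterms : ∀ k ∈ Finset.univ, (0:ℝ) ≤ f k * (⇑(b k) ⬝ᵥ u)^2 :=
          fun k _ => mul_nonneg (hpsd k) (sq_nonneg _)
        have := (Finset.sum_eq_zero_iff_of_nonneg hterms).mp hqu.symm k (Finset.mem_univ k)
        have hfk : 0 < f k := lt_of_lt_of_le hpos (key k hkj)
        have : (⇑(b k) ⬝ᵥ u)^2 = 0 := by
          by_contra hne
          exact hne (by nlinarith)
        exact pow_eq_zero_iff (by norm_num) |>.mp this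
      have hcju : ⇑(b j) ⬝ᵥ u ≠ 0 := by
        intro hcj
        apply hune
        have huu : u ⬝ᵥ u = ∑ k, (⇑(b k) ⬝ᵥ u)^2 := by simpa [sq] using dot_expand b (WithLp.toLp 2 u) (WithLp.toLp 2 u)
        have : u ⬝ᵥ u = 0 := by
          rw [huu]
          refine Finset.sum_eq_zero fun k _ => ?_
          by_cases hkj : k = j
          · rw [hkj, hcj]; ring
          · rw [hzero k hkj]; ring
        exact funext fun i => by
          have := dotProduct_self_eq_zero.mp this
          exact congrFun this i
      have hux' : u ⬝ᵥ x = ∑ k, (⇑(b k) ⬝ᵥ u) * (⇑(b k) ⬝ᵥ x) := by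
          have := dot_expand b (WithLp.toLp 2 u) (WithLp.toLp 2 x)
          simpa only [WithLp.ofLp_toLp] using this
      have hsum : (⇑(b j) ⬝ᵥ u) * (⇑(b j) ⬝ᵥ x) = 0 := by
        have : ∑ k, (⇑(b k) ⬝ᵥ u) * (⇑(b k) ⬝ᵥ x) = 0 := by rw [← hux', hux]
        rw [← this]
        rw [Finset.sum_eq_single j]
        · intro k _ hkj; rw [hzero k hkj]; ring
        · intro h; exact absurd (Finset.mem_univ j) h
      have hcjx : ⇑(b j) ⬝ᵥ x = 0 := by
        rcases mul_eq_zero.mp hsum with h | h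
        · exact absurd h hcju
        · exact h
      rw [hij, hcjx]
      simp
    · have := key i hij
      have := sq_nonneg (⇑(b i) ⬝ᵥ x)
      nlinarith

lemma lemB {m : ℕ} (hm : 2 ≤ m) {A : Matrix (Fin m) (Fin m) ℝ} (hA : A.IsHermitian)
    (u : Fin m → ℝ) :
    ∃ x : Fin m → ℝ, x ⬝ᵥ x ≠ 0 ∧ u ⬝ᵥ x = 0 ∧
      x ⬝ᵥ (A *ᵥ x) ≤ hA.eigenvalues (Tuple.sort hA.eigenvalues ⟨1, Nat.lt_of_lt_of_le one_lt_two hm⟩) * (x ⬝ᵥ x) := by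
  set b := hA.eigenvectorBasis with hb
  set f := hA.eigenvalues with hf
  set σ := Tuple.sort hA.eigenvalues with hσ
  set μ := f (σ ⟨1, Nat.lt_of_lt_of_le one_lt_two hm⟩) with hμ
  set j0 : Fin m := σ ⟨0, by omega⟩ with hj0
  set j1 : Fin m := σ ⟨1, Nat.lt_of_lt_of_le one_lt_two hm⟩ with hj1
  have hmono : Monotone (f ∘ σ) := Tuple.monotone_sort f
  have hlam : f j0 ≤ μ := hmono (show (⟨0, by omega⟩ : Fin m) ≤ ⟨1, Nat.lt_of_lt_of_le one_lt_two hm⟩ from by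
    exact Fin.mk_le_of_le_val (by omega))
  have hjne : j0 ≠ j1 := by
    intro h
    have := σ.injective h
    exact absurd (congrArg Fin.val this) (by norm_num)
  -- generic construction
  have main : ∀ p q : ℝ, ¬(p = 0 ∧ q = 0) →
      let x : Fin m → ℝ := p • ⇑(b j0) + q • ⇑(b j1)
      x ⬝ᵥ x = p^2 + q^2 ∧ u ⬝ᵥ x = p * (u ⬝ᵥ ⇑(b j0)) + q * (u ⬝ᵥ ⇑(b j1)) ∧
        x ⬝ᵥ (A *ᵥ x) ≤ μ * (x ⬝ᵥ x) := by
    intro p q hpq x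
    have h00 : ⇑(b j0) ⬝ᵥ ⇑(b j0) = 1 := by simp [dot_basis]
    have h11 : ⇑(b j1) ⬝ᵥ ⇑(b j1) = 1 := by simp [dot_basis]
    have h01 : ⇑(b j0) ⬝ᵥ ⇑(b j1) = 0 := by simp [dot_basis, hjne]
    have h10 : ⇑(b j1) ⬝ᵥ ⇑(b j0) = 0 := by simp [dot_basis, Ne.symm hjne]
    have hxx : x ⬝ᵥ x = p^2 + q^2 := by
      simp only [x, add_dotProduct, dotProduct_add, smul_dotProduct, dotProduct_smul,
        h00, h11, h01, h10, smul_eq_mul]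
      ring
    have hux : u ⬝ᵥ x = p * (u ⬝ᵥ ⇑(b j0)) + q * (u ⬝ᵥ ⇑(b j1)) := by
      simp only [x, dotProduct_add, dotProduct_smul, smul_eq_mul]
    have hAx : A *ᵥ x = (p * f j0) • ⇑(b j0) + (q * f j1) • ⇑(b j1) := by
      simp only [x, Matrix.mulVec_add, Matrix.mulVec_smul, hb, hA.mulVec_eigenvectorBasis]
      rw [smul_smul, smul_smul]
    have hquad : x ⬝ᵥ (A *ᵥ x) = f j0 * p^2 + μ * q^2 := by
      rw [hAx]
      simp only [x, add_dotProduct, dotProduct_add, smul_dotProduct, dotProduct_smul,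
        h00, h11, h01, h10, smul_eq_mul]
      rw [hμ, hj1]
      ring
    refine ⟨hxx, hux, ?_⟩
    rw [hquad, hxx]
    nlinarith [sq_nonneg p, sq_nonneg q]
  by_cases hc : u ⬝ᵥ ⇑(b j0) = 0 ∧ u ⬝ᵥ ⇑(b j1) = 0
  · obtain ⟨hxx, hux, hquad⟩ := main 1 0 (by norm_num)
    refine ⟨(1:ℝ) • ⇑(b j0) + (0:ℝ) • ⇑(b j1), by rw [hxx]; norm_num, ?_, hquad⟩
    rw [hux, hc.1, hc.2]; ring
  · set a := u ⬝ᵥ ⇑(b j1) with ha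
    set c := u ⬝ᵥ ⇑(b j0) with hcc
    have hpq : ¬(a = 0 ∧ -c = 0) := by
      intro ⟨h1, h2⟩
      exact hc ⟨neg_eq_zero.mp h2, h1⟩
    obtain ⟨hxx, hux, hquad⟩ := main a (-c) hpq
    refine ⟨a • ⇑(b j0) + (-c) • ⇑(b j1), ?_, ?_, hquad⟩
    · rw [hxx]
      intro h
      have ha0 : a = 0 := by nlinarith [sq_nonneg a, sq_nonneg c]
      have hc0 : c = 0 := by nlinarith [sq_nonneg a, sq_nonneg c]
      exact hpq ⟨ha0, by rw [hc0]; ring⟩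
    · rw [hux]; ring


lemma dot_reindex {κ ι : Type*} [Fintype κ] [Fintype ι] (e : ι ≃ κ) (u v : κ → ℝ) :
    u ⬝ᵥ v = (u ∘ e) ⬝ᵥ (v ∘ e) :=
  (Fintype.sum_equiv e _ _ fun s => rfl).symm

lemma supra_apply {N : ℕ} (L1 L2 : Matrix (Fin N) (Fin N) ℝ) (w : Fin N → ℝ) (z1 z2 : Fin N → ℝ) :
    supraLap L1 L2 w *ᵥ (Sum.elim z1 z2 ∘ ⇑finSumFinEquiv.symm)
      = Sum.elim (L1 *ᵥ z1 + (Matrix.diagonal w *ᵥ z1 - Matrix.diagonal w *ᵥ z2))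
          (L2 *ᵥ z2 + (Matrix.diagonal w *ᵥ z2 - Matrix.diagonal w *ᵥ z1))
          ∘ ⇑finSumFinEquiv.symm := by
  rw [supraLap, Matrix.reindex_apply, Matrix.submatrix_mulVec_equiv]
  have hcomp : (Sum.elim z1 z2 ∘ ⇑finSumFinEquiv.symm) ∘ ⇑finSumFinEquiv.symm.symm
      = Sum.elim z1 z2 := by
    funext s; simp
  rw [hcomp, Matrix.fromBlocks_mulVec]
  congr 1
  funext s
  rcases s with a | b <;>
  · simp only [Sum.elim_comp_inl, Sum.elim_comp_inr, Matrix.add_mulVec, Matrix.neg_mulVec,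
      Sum.elim_inl, Sum.elim_inr, Pi.add_apply, Pi.sub_apply, Pi.neg_apply]
    ring

lemma supra_quad {N : ℕ} (L1 L2 : Matrix (Fin N) (Fin N) ℝ) (w : Fin N → ℝ) (z1 z2 : Fin N → ℝ) :
    (Sum.elim z1 z2 ∘ ⇑finSumFinEquiv.symm) ⬝ᵥ
        (supraLap L1 L2 w *ᵥ (Sum.elim z1 z2 ∘ ⇑finSumFinEquiv.symm))
      = z1 ⬝ᵥ (L1 *ᵥ z1) + z2 ⬝ᵥ (L2 *ᵥ z2) + ∑ i, w i * (z1 i - z2 i)^2 := by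
  rw [supra_apply, dot_reindex finSumFinEquiv]
  have h1 : (Sum.elim z1 z2 ∘ ⇑finSumFinEquiv.symm) ∘ ⇑finSumFinEquiv = Sum.elim z1 z2 := by
    funext s; simp
  have h2 : ∀ a b : Fin N → ℝ, (Sum.elim a b ∘ ⇑finSumFinEquiv.symm) ∘ ⇑finSumFinEquiv
      = Sum.elim a b := by intro a b; funext s; simp
  rw [h1, h2, sumElim_dotProduct_sumElim]
  have hW : ∀ a b : Fin N → ℝ, a ⬝ᵥ (Matrix.diagonal w *ᵥ b) = ∑ i, w i * (a i * b i) := by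
    intro a b
    simp only [dotProduct, Matrix.mulVec_diagonal]
    exact Finset.sum_congr rfl fun i _ => by ring
  simp only [dotProduct_add, dotProduct_sub, hW]
  have hkey : ∑ i, w i * (z1 i * z1 i) - ∑ i, w i * (z1 i * z2 i)
      + (∑ i, w i * (z2 i * z2 i) - ∑ i, w i * (z2 i * z1 i))
      = ∑ i, w i * (z1 i - z2 i)^2 := by
    rw [← Finset.sum_sub_distrib, ← Finset.sum_sub_distrib, ← Finset.sum_add_distrib]
    exact Finset.sum_congr rfl fun i _ => by ring
  linarith [hkey]

lemma elim_decomp {N : ℕ} (z : Fin (N + N) → ℝ) :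
    z = Sum.elim (fun i => z (finSumFinEquiv (Sum.inl i))) (fun i => z (finSumFinEquiv (Sum.inr i)))
        ∘ ⇑finSumFinEquiv.symm := by
  funext i
  simp only [Function.comp_apply]
  rcases h : finSumFinEquiv.symm i with a | b
  · have : i = finSumFinEquiv (Sum.inl a) := by rw [← h, Equiv.apply_symm_apply]
    rw [this]; simp
  · have : i = finSumFinEquiv (Sum.inr b) := by rw [← h, Equiv.apply_symm_apply]
    rw [this]; simp

lemma supra_herm {N : ℕ} {L1 L2 : Matrix (Fin N) (Fin N) ℝ} (h1 : L1.IsHermitian)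
    (h2 : L2.IsHermitian) (w : Fin N → ℝ) : (supraLap L1 L2 w).IsHermitian := by
  rw [supraLap, Matrix.reindex_apply]
  apply Matrix.IsHermitian.submatrix
  have hd : (Matrix.diagonal w).IsHermitian := Matrix.isHermitian_diagonal w
  rw [Matrix.IsHermitian, Matrix.fromBlocks_conjTranspose]
  rw [(h1.add hd).eq, (h2.add hd).eq, hd.neg.eq]

lemma supra_psd {N : ℕ} {L1 L2 : Matrix (Fin N) (Fin N) ℝ} (h1 : L1.PosSemidef)
    (h2 : L2.PosSemidef) {w : Fin N → ℝ} (hw : ∀ i, 0 ≤ w i) :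
    (supraLap L1 L2 w).PosSemidef := by
  refine PosSemidef.of_dotProduct_mulVec_nonneg (supra_herm h1.1 h2.1 w) fun z => ?_
  have hz := elim_decomp z
  have hq := supra_quad L1 L2 w (fun i => z (finSumFinEquiv (Sum.inl i)))
    (fun i => z (finSumFinEquiv (Sum.inr i)))
  have hstar : star z = z := by funext i; simp
  rw [hstar, hz, hq]
  have t1 := h1.dotProduct_mulVec_nonneg (fun i => z (finSumFinEquiv (Sum.inl i)))
  have t2 := h2.dotProduct_mulVec_nonneg (fun i => z (finSumFinEquiv (Sum.inr i)))
  simp only [star_trivial] at t1 t2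
  have t3 : (0:ℝ) ≤ ∑ i, w i * ((fun i => z (finSumFinEquiv (Sum.inl i))) i
      - (fun i => z (finSumFinEquiv (Sum.inr i))) i)^2 :=
    Finset.sum_nonneg fun i _ => mul_nonneg (hw i) (sq_nonneg _)
  linarith

lemma supra_ones {N : ℕ} {L1 L2 : Matrix (Fin N) (Fin N) ℝ} (w : Fin N → ℝ)
    (h1 : L1 *ᵥ (fun _ => (1:ℝ)) = 0) (h2 : L2 *ᵥ (fun _ => (1:ℝ)) = 0) :
    supraLap L1 L2 w *ᵥ (fun _ => (1:ℝ)) = 0 := by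
  have hone : (fun _ => (1:ℝ)) = Sum.elim (fun (_ : Fin N) => (1:ℝ)) (fun (_ : Fin N) => (1:ℝ))
      ∘ ⇑(finSumFinEquiv (n := N)).symm := by
    funext i
    rcases h : finSumFinEquiv.symm i with a | b <;> simp [h]
  rw [hone, supra_apply, h1, h2]
  funext i
  rcases h : finSumFinEquiv.symm i with a | b <;> simp [h]


/-- Upper bound on the algebraic connectivity by the average layer Laplacian:
`λ₂(L(w)) ≤ λ₂((L1 + L2)/2)` for every nonnegative weight vector `w`. -/
theorem stmt2 (N : ℕ) (hN : 2 ≤ N)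
    (L1 L2 : Matrix (Fin N) (Fin N) ℝ)
    (hL1 : L1.PosSemidef) (hL2 : L2.PosSemidef)
    (hL1e : L1 *ᵥ (fun _ => (1 : ℝ)) = 0) (hL2e : L2 *ᵥ (fun _ => (1 : ℝ)) = 0)
    (w : Fin N → ℝ) (hw : ∀ i, 0 ≤ w i) :
    sortedEigs (supraLap L1 L2 w) ⟨1, by omega⟩
      ≤ sortedEigs (((1 : ℝ) / 2) • (L1 + L2)) ⟨1, by omega⟩ := by
  have hAveH : (((1 : ℝ) / 2) • (L1 + L2)).IsHermitian := by
    have hadd : (L1 + L2).IsHermitian := hL1.1.add hL2.1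
    rw [Matrix.IsHermitian, Matrix.conjTranspose_smul, hadd.eq]
    norm_num
  obtain ⟨x, hxx0, hux, hquad⟩ := lemB hN hAveH (fun _ => 1)
  have hSH := supra_herm hL1.1 hL2.1 w
  have hSpsd := supra_psd hL1 hL2 hw
  have h1y : (fun _ => (1:ℝ)) ⬝ᵥ (Sum.elim x x ∘ ⇑finSumFinEquiv.symm) = 0 := by
    rw [dot_reindex finSumFinEquiv]
    have h1 : ((fun _ => (1:ℝ)) ∘ ⇑(finSumFinEquiv (m := N) (n := N)))
        = Sum.elim (fun _ => (1:ℝ)) (fun _ => (1:ℝ)) := by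
      funext s; rcases s with a | b <;> simp
    have h2 : ((Sum.elim x x ∘ ⇑finSumFinEquiv.symm) ∘ ⇑finSumFinEquiv) = Sum.elim x x := by
      funext s; simp
    rw [h1, h2, sumElim_dotProduct_sumElim, hux]
    ring
  have hyy : (Sum.elim x x ∘ ⇑finSumFinEquiv.symm) ⬝ᵥ (Sum.elim x x ∘ ⇑finSumFinEquiv.symm)
      = 2 * (x ⬝ᵥ x) := by
    rw [dot_reindex finSumFinEquiv]
    have h2 : ((Sum.elim x x ∘ ⇑finSumFinEquiv.symm) ∘ ⇑finSumFinEquiv) = Sum.elim x x := by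
      funext s; simp
    rw [h2, sumElim_dotProduct_sumElim]
    ring
  have hone_ne : (fun _ => (1:ℝ)) ≠ (0 : Fin (N+N) → ℝ) := by
    intro h
    have := congrFun h ⟨0, by omega⟩
    norm_num at this
  have main := lemA (m := N + N) (by omega) hSH hSpsd.eigenvalues_nonneg
    (fun _ => 1) (supra_ones w hL1e hL2e) hone_ne
    (Sum.elim x x ∘ ⇑finSumFinEquiv.symm) h1y
  have hq := supra_quad L1 L2 w x x
  have hzero : ∑ i, w i * (x i - x i)^2 = 0 := by
    refine Finset.sum_eq_zero fun i _ => by ring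
  rw [hzero] at hq
  have hxAve : x ⬝ᵥ ((((1 : ℝ) / 2) • (L1 + L2)) *ᵥ x)
      = (1/2) * (x ⬝ᵥ (L1 *ᵥ x) + x ⬝ᵥ (L2 *ᵥ x)) := by
    rw [Matrix.smul_mulVec, Matrix.add_mulVec, dotProduct_smul, dotProduct_add]
    simp [smul_eq_mul]
  have hxnn : 0 ≤ x ⬝ᵥ x := Finset.sum_nonneg fun i _ => mul_self_nonneg _
  have hxpos : 0 < x ⬝ᵥ x := lt_of_le_of_ne hxnn (Ne.symm hxx0)
  rw [sortedEigs, sortedEigs, dif_pos hSH, dif_pos hAveH]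
  set μS := hSH.eigenvalues (Tuple.sort hSH.eigenvalues ⟨1, by omega⟩) with hμS
  set μA := hAveH.eigenvalues (Tuple.sort hAveH.eigenvalues ⟨1, by omega⟩) with hμA
  have hchain : μS * (2 * (x ⬝ᵥ x)) ≤ μA * (2 * (x ⬝ᵥ x)) := by
    rw [hxAve] at hquad
    calc μS * (2 * (x ⬝ᵥ x))
        = μS * ((Sum.elim x x ∘ ⇑finSumFinEquiv.symm) ⬝ᵥ (Sum.elim x x ∘ ⇑finSumFinEquiv.symm)) := by
          rw [hyy]
      _ ≤ (Sum.elim x x ∘ ⇑finSumFinEquiv.symm) ⬝ᵥ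
            (supraLap L1 L2 w *ᵥ (Sum.elim x x ∘ ⇑finSumFinEquiv.symm)) := main
      _ = x ⬝ᵥ (L1 *ᵥ x) + x ⬝ᵥ (L2 *ᵥ x) := by rw [hq]; ring
      _ ≤ μA * (2 * (x ⬝ᵥ x)) := by linarith
  have h2pos : 0 < 2 * (x ⬝ᵥ x) := by linarith
  exact le_of_mul_le_mul_right hchain h2pos
end

section
/- Optimal spectral radius below the threshold (Theorem 1): assume λmax(L1) > λmax(L2), that λ_N¹ := λmax(L1) is a simple eigenvalue of L1 with eigenvector v ∈ ℝ^N (v ≠ 0, L1·v = λ_N¹·v), and that the nodal set {i : v_i = 0} is nonempty. Let c ≥ 0 be a budget such that for every w ∈ ℝ^N with w_i ≥ 0 and Σ_{i=1}^N w_i = c, the second largest eigenvalue λ_{n−1}(L(w)) is strictly less than λ_N¹. Then: (i) the minimum of λmax(L(w)) over all w ≥ 0 with Σ w_i = c equals λ_N¹ and is attained; and (ii) a weight w ≥ 0 with Σ w_i = c attains this minimum if and only if W·v = 0 (where W = diag(w)). -/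
open Matrix

lemma sortedEigs_eq {m : ℕ} {A : Matrix (Fin m) (Fin m) ℝ} (hA : A.IsHermitian) (k : Fin m) :
    sortedEigs A k = hA.eigenvalues (Tuple.sort hA.eigenvalues k) := by
  rw [sortedEigs, dif_pos hA]

lemma eig_le_last {m : ℕ} {A : Matrix (Fin m) (Fin m) ℝ} (hA : A.IsHermitian) (hm : 0 < m)
    (i : Fin m) : hA.eigenvalues i ≤ sortedEigs A ⟨m - 1, by omega⟩ := by
  rw [sortedEigs_eq hA]
  have h := Tuple.monotone_sort hA.eigenvalues
  have h1 : hA.eigenvalues i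
      = (hA.eigenvalues ∘ Tuple.sort hA.eigenvalues) ((Tuple.sort hA.eigenvalues)⁻¹ i) := by
    simp
  rw [h1]
  exact h (by rw [Fin.le_def]; exact Nat.le_sub_one_of_lt (Fin.is_lt _))

lemma eig_eq_last_of_gt {m : ℕ} {A : Matrix (Fin m) (Fin m) ℝ} (hA : A.IsHermitian)
    (hm : 2 ≤ m) (i : Fin m) (h : sortedEigs A ⟨m - 2, by omega⟩ < hA.eigenvalues i) :
    hA.eigenvalues i = sortedEigs A ⟨m - 1, by omega⟩ := by
  rw [sortedEigs_eq hA] at h ⊢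
  set σ := Tuple.sort hA.eigenvalues with hσ
  have h1 : hA.eigenvalues i = (hA.eigenvalues ∘ σ) (σ⁻¹ i) := by simp
  have hmono := Tuple.monotone_sort hA.eigenvalues
  by_cases hj : (σ⁻¹ i : ℕ) ≤ m - 2
  · exfalso
    have : (hA.eigenvalues ∘ σ) (σ⁻¹ i) ≤ (hA.eigenvalues ∘ σ) ⟨m - 2, by omega⟩ :=
      hmono (by rw [Fin.le_def]; exact hj)
    rw [← h1] at this
    exact absurd this (not_le.mpr h)
  · have hj' : (σ⁻¹ i : ℕ) = m - 1 := by
      have := (σ⁻¹ i).is_lt; omega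
    have heq : σ⁻¹ i = (⟨m - 1, by omega⟩ : Fin m) := Fin.ext hj'
    rw [h1, heq]; rfl

lemma rayleigh_le {m : ℕ} {A : Matrix (Fin m) (Fin m) ℝ} (hA : A.IsHermitian)
    (hm : 0 < m) (x : Fin m → ℝ) :
    x ⬝ᵥ (A *ᵥ x) ≤ sortedEigs A ⟨m - 1, by omega⟩ * (x ⬝ᵥ x) := by
  set μ := sortedEigs A ⟨m - 1, by omega⟩ with hμdef
  obtain ⟨U, hUU, hUU', hs⟩ : ∃ U : Matrix (Fin m) (Fin m) ℝ,
      U * star U = 1 ∧ star U * U = 1 ∧ A = U * diagonal hA.eigenvalues * star U := by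
    refine ⟨hA.eigenvectorUnitary, mem_unitaryGroup_iff.mp hA.eigenvectorUnitary.2,
      mem_unitaryGroup_iff'.mp hA.eigenvectorUnitary.2, ?_⟩
    have hs := hA.spectral_theorem
    have hofReal : (RCLike.ofReal ∘ hA.eigenvalues : Fin m → ℝ) = hA.eigenvalues := by
      ext i; simp
    rw [hofReal] at hs
    exact hs
  have hd : diagonal (fun i => μ - hA.eigenvalues i)
      = μ • (1 : Matrix (Fin m) (Fin m) ℝ) - diagonal hA.eigenvalues := by
    ext i j
    rcases eq_or_ne i j with h | h <;>
      simp [Matrix.diagonal_apply, Matrix.one_apply, Matrix.sub_apply, h]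
  have h1 : U * diagonal (fun i => μ - hA.eigenvalues i) * star U
      = μ • (1 : Matrix (Fin m) (Fin m) ℝ) - A := by
    calc U * diagonal (fun i => μ - hA.eigenvalues i) * star U
        = U * (μ • (1 : Matrix (Fin m) (Fin m) ℝ) - diagonal hA.eigenvalues) * star U := by
          rw [hd]
      _ = U * (μ • (1 : Matrix (Fin m) (Fin m) ℝ)) * star U
            - U * diagonal hA.eigenvalues * star U := by
          rw [Matrix.mul_sub, Matrix.sub_mul]
      _ = μ • (1 : Matrix (Fin m) (Fin m) ℝ) - A := by
          rw [Matrix.mul_smul, Matrix.mul_one, Matrix.smul_mul, hUU, ← hs]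
  have hB : (μ • (1 : Matrix (Fin m) (Fin m) ℝ) - A).PosSemidef := by
    rw [← h1, Matrix.star_eq_conjTranspose]
    exact (posSemidef_diagonal_iff.mpr fun i =>
      sub_nonneg.mpr (eig_le_last hA hm i)).mul_mul_conjTranspose_same U
  have h2 := hB.re_dotProduct_nonneg x
  simp only [star_trivial, RCLike.re_to_real] at h2
  rw [Matrix.sub_mulVec, smul_mulVec, Matrix.one_mulVec, dotProduct_sub,
    dotProduct_smul, smul_eq_mul] at h2
  linarith

lemma exists_eigenvalue_eq {m : ℕ} {A : Matrix (Fin m) (Fin m) ℝ} (hA : A.IsHermitian)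
    {x : Fin m → ℝ} (hx : x ≠ 0) {t : ℝ} (h : A *ᵥ x = t • x) :
    ∃ i, hA.eigenvalues i = t := by
  obtain ⟨U, hUU, hUU', hs⟩ : ∃ U : Matrix (Fin m) (Fin m) ℝ,
      U * star U = 1 ∧ star U * U = 1 ∧ A = U * diagonal hA.eigenvalues * star U := by
    refine ⟨hA.eigenvectorUnitary, mem_unitaryGroup_iff.mp hA.eigenvectorUnitary.2,
      mem_unitaryGroup_iff'.mp hA.eigenvectorUnitary.2, ?_⟩
    have hs := hA.spectral_theorem
    have hofReal : (RCLike.ofReal ∘ hA.eigenvalues : Fin m → ℝ) = hA.eigenvalues := by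
      ext i; simp
    rw [hofReal] at hs
    exact hs
  set y := star U *ᵥ x with hy
  have hy0 : y ≠ 0 := by
    intro h0
    apply hx
    have h1 : U *ᵥ y = U *ᵥ (0 : Fin m → ℝ) := by rw [h0]
    rw [hy, Matrix.mulVec_mulVec, hUU, Matrix.one_mulVec, Matrix.mulVec_zero] at h1
    exact h1
  have h2 : star U * A = diagonal hA.eigenvalues * star U := by
    calc star U * A = star U * (U * diagonal hA.eigenvalues * star U) := by rw [← hs]
      _ = diagonal hA.eigenvalues * star U := by
          rw [← Matrix.mul_assoc, ← Matrix.mul_assoc, hUU', Matrix.one_mul]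
  have hDy : diagonal hA.eigenvalues *ᵥ y = t • y := by
    rw [hy, Matrix.mulVec_mulVec, ← h2, ← Matrix.mulVec_mulVec, h, Matrix.mulVec_smul]
  obtain ⟨i, hi⟩ := Function.ne_iff.mp hy0
  have h3 := congrFun hDy i
  rw [Matrix.mulVec_diagonal] at h3
  have h4 : t • y i = t * y i := rfl
  rw [Pi.smul_apply, smul_eq_mul] at h3
  exact ⟨i, mul_right_cancel₀ hi h3⟩

lemma sortedEigs_last_eq_of {m : ℕ} {A : Matrix (Fin m) (Fin m) ℝ} (hA : A.IsHermitian)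
    (hm : 2 ≤ m) {x : Fin m → ℝ} (hx : x ≠ 0) {t : ℝ} (h : A *ᵥ x = t • x)
    (hlt : sortedEigs A ⟨m - 2, by omega⟩ < t) :
    sortedEigs A ⟨m - 1, by omega⟩ = t := by
  obtain ⟨i, hi⟩ := exists_eigenvalue_eq hA hx h
  rw [← hi] at hlt ⊢
  exact (eig_eq_last_of_gt hA hm i hlt).symm

/-- Optimal spectral radius below the threshold (Theorem 1): if `λmax(L1) > λmax(L2)`,
`λmax(L1)` is simple for `L1` with eigenvector `v` having a nonempty nodal set, and for
budget `c` every feasible weight keeps the second largest eigenvalue strictly below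
`λmax(L1)`, then the minimum of `λmax(L(w))` over feasible weights equals `λmax(L1)` and is
attained, and a feasible weight is optimal iff `W·v = 0`. -/
theorem stmt10 (N : ℕ) (hN : 1 ≤ N)
    (L1 L2 : Matrix (Fin N) (Fin N) ℝ)
    (hL1 : L1.PosSemidef) (hL2 : L2.PosSemidef)
    (hL1e : L1 *ᵥ (fun _ => (1 : ℝ)) = 0) (hL2e : L2 *ᵥ (fun _ => (1 : ℝ)) = 0)
    (hgap : sortedEigs L2 ⟨N - 1, by omega⟩ < sortedEigs L1 ⟨N - 1, by omega⟩)
    (v : Fin N → ℝ) (hv : v ≠ 0)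
    (hev : L1 *ᵥ v = sortedEigs L1 ⟨N - 1, by omega⟩ • v)
    (hsimple : ∀ u : Fin N → ℝ,
      L1 *ᵥ u = sortedEigs L1 ⟨N - 1, by omega⟩ • u → ∃ t : ℝ, u = t • v)
    (hnodal : ∃ i, v i = 0)
    (c : ℝ) (hc : 0 ≤ c)
    (hthresh : ∀ w : Fin N → ℝ, (∀ i, 0 ≤ w i) → ∑ i, w i = c →
      sortedEigs (supraLap L1 L2 w) ⟨N + N - 2, by omega⟩
        < sortedEigs L1 ⟨N - 1, by omega⟩) :
    IsLeast {x : ℝ | ∃ w : Fin N → ℝ, (∀ i, 0 ≤ w i) ∧ ∑ i, w i = c ∧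
        x = sortedEigs (supraLap L1 L2 w) ⟨N + N - 1, by omega⟩}
      (sortedEigs L1 ⟨N - 1, by omega⟩) ∧
    ∀ w : Fin N → ℝ, (∀ i, 0 ≤ w i) → ∑ i, w i = c →
      (sortedEigs (supraLap L1 L2 w) ⟨N + N - 1, by omega⟩
          = sortedEigs L1 ⟨N - 1, by omega⟩ ↔ ∀ i, w i * v i = 0) := by
  set lam := sortedEigs L1 ⟨N - 1, by omega⟩ with hlam
  set xhat : Fin (N + N) → ℝ := fun i => Sum.elim v 0 (finSumFinEquiv.symm i) with hxhat
  have hmn : 2 ≤ N + N := by omega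
  -- Hermitian
  have hherm : ∀ w : Fin N → ℝ, (supraLap L1 L2 w).IsHermitian := by
    intro w
    rw [supraLap, Matrix.reindex_apply, isHermitian_submatrix_equiv]
    show _ᴴ = _
    rw [Matrix.fromBlocks_conjTranspose]
    have h1 : L1ᵀ = L1 := by
      have := hL1.1; rwa [Matrix.IsHermitian, Matrix.conjTranspose_eq_transpose_of_trivial] at this
    have h2 : L2ᵀ = L2 := by
      have := hL2.1; rwa [Matrix.IsHermitian, Matrix.conjTranspose_eq_transpose_of_trivial] at this
    simp [Matrix.conjTranspose_add, Matrix.diagonal_conjTranspose, h1, h2]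
  -- mulVec formula
  have hmv : ∀ w : Fin N → ℝ, supraLap L1 L2 w *ᵥ xhat
      = (Sum.elim (L1 *ᵥ v + diagonal w *ᵥ v) (-(diagonal w *ᵥ v)))
          ∘ (finSumFinEquiv.symm : Fin (N + N) → Fin N ⊕ Fin N) := by
    intro w
    rw [supraLap, Matrix.reindex_apply, Matrix.submatrix_mulVec_equiv]
    have hx : (xhat ∘ (finSumFinEquiv.symm.symm : Fin N ⊕ Fin N → Fin (N + N)))
        = Sum.elim v 0 := by
      funext s
      simp [hxhat]
    rw [hx, Matrix.fromBlocks_mulVec]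
    funext i
    rcases hs : (finSumFinEquiv.symm i : Fin N ⊕ Fin N) with s | s <;>
      simp [hs, Matrix.add_mulVec, Matrix.neg_mulVec, Matrix.mulVec_diagonal, neg_mul]
  -- dot product transport
  have hdot : ∀ z : Fin N ⊕ Fin N → ℝ,
      xhat ⬝ᵥ (z ∘ (finSumFinEquiv.symm : Fin (N + N) → Fin N ⊕ Fin N))
        = Sum.elim v 0 ⬝ᵥ z := by
    intro z
    simp only [dotProduct, hxhat]
    exact Equiv.sum_comp finSumFinEquiv.symm fun s => Sum.elim v 0 s * z s
  have hxx : xhat ⬝ᵥ xhat = v ⬝ᵥ v := by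
    have h := hdot (Sum.elim v 0)
    calc xhat ⬝ᵥ xhat
        = xhat ⬝ᵥ (Sum.elim v 0 ∘ (finSumFinEquiv.symm : Fin (N + N) → Fin N ⊕ Fin N)) := rfl
      _ = Sum.elim v 0 ⬝ᵥ Sum.elim v 0 := h
      _ = v ⬝ᵥ v := by rw [sumElim_dotProduct_sumElim, zero_dotProduct, add_zero]
  -- quadratic form
  have hquad : ∀ w : Fin N → ℝ,
      xhat ⬝ᵥ (supraLap L1 L2 w *ᵥ xhat) = lam * (v ⬝ᵥ v) + ∑ i, w i * v i ^ 2 := by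
    intro w
    rw [hmv w, hdot, sumElim_dotProduct_sumElim, zero_dotProduct, add_zero,
      dotProduct_add, hev, dotProduct_smul, smul_eq_mul]
    congr 1
    simp only [dotProduct, Matrix.mulVec_diagonal]
    apply Finset.sum_congr rfl
    intro i _
    ring
  have hvv : 0 < v ⬝ᵥ v := by
    rcases Function.ne_iff.mp hv with ⟨i, hi⟩
    have h1 : 0 < v i * v i := mul_self_pos.mpr hi
    calc (0 : ℝ) < v i * v i := h1
      _ ≤ ∑ j, v j * v j :=
        Finset.single_le_sum (fun j _ => mul_self_nonneg (v j)) (Finset.mem_univ i)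
      _ = v ⬝ᵥ v := rfl
  have hxhat0 : xhat ≠ 0 := by
    rcases Function.ne_iff.mp hv with ⟨i, hi⟩
    intro h0
    apply hi
    have := congrFun h0 (finSumFinEquiv (Sum.inl i))
    simpa [hxhat] using this
  -- lower bound
  have hlower : ∀ w : Fin N → ℝ, (∀ i, 0 ≤ w i) →
      lam ≤ sortedEigs (supraLap L1 L2 w) ⟨N + N - 1, by omega⟩ := by
    intro w hw
    have hr := rayleigh_le (hherm w) (by omega) xhat
    rw [hquad w, hxx] at hr
    have hS : 0 ≤ ∑ i, w i * v i ^ 2 :=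
      Finset.sum_nonneg fun i _ => mul_nonneg (hw i) (sq_nonneg _)
    nlinarith
  -- equality → nodal condition
  have hfwd : ∀ w : Fin N → ℝ, (∀ i, 0 ≤ w i) →
      sortedEigs (supraLap L1 L2 w) ⟨N + N - 1, by omega⟩ = lam → ∀ i, w i * v i = 0 := by
    intro w hw heq i
    have hr := rayleigh_le (hherm w) (by omega : 0 < N + N) xhat
    rw [hquad w, hxx, heq] at hr
    have hS : ∑ j, w j * v j ^ 2 ≤ 0 := by linarith
    have hz : ∀ j ∈ Finset.univ, w j * v j ^ 2 = 0 := by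
      rw [← Finset.sum_eq_zero_iff_of_nonneg
        (fun j _ => mul_nonneg (hw j) (sq_nonneg (v j)))]
      have : 0 ≤ ∑ j, w j * v j ^ 2 :=
        Finset.sum_nonneg fun j _ => mul_nonneg (hw j) (sq_nonneg _)
      linarith
    have hzi := hz i (Finset.mem_univ i)
    rcases mul_eq_zero.mp hzi with h | h
    · rw [h, zero_mul]
    · rw [pow_eq_zero_iff (by norm_num : 2 ≠ 0)] at h
      rw [h, mul_zero]
  -- nodal condition → equality (needs feasibility for the threshold)
  have hbwd : ∀ w : Fin N → ℝ, (∀ i, 0 ≤ w i) → ∑ i, w i = c → (∀ i, w i * v i = 0) →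
      sortedEigs (supraLap L1 L2 w) ⟨N + N - 1, by omega⟩ = lam := by
    intro w hw hsum hwv
    have hWv : diagonal w *ᵥ v = 0 := by
      funext i
      rw [Matrix.mulVec_diagonal]
      exact hwv i
    have hmv' : supraLap L1 L2 w *ᵥ xhat = lam • xhat := by
      rw [hmv w, hWv, hev]
      funext i
      simp only [Function.comp_apply, Pi.smul_apply, hxhat]
      rcases hs : (finSumFinEquiv.symm i : Fin N ⊕ Fin N) with s | s <;> simp [hs]
    exact sortedEigs_last_eq_of (hherm w) hmn hxhat0 hmv' (hthresh w hw hsum)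
  refine ⟨⟨?_, ?_⟩, ?_⟩
  · -- membership
    obtain ⟨i0, hi0⟩ := hnodal
    refine ⟨fun i => if i = i0 then c else 0, fun i => ?_, ?_, ?_⟩
    · by_cases h : i = i0 <;> simp [h, hc]
    · simp
    · refine (hbwd _ (fun i => by by_cases h : i = i0 <;> simp [h, hc]) (by simp)
        fun i => ?_).symm
      by_cases h : i = i0
      · subst h; rw [hi0, mul_zero]
      · simp [h]
  · rintro x ⟨w, hw, hsum, rfl⟩
    exact hlower w hw
  · intro w hw hsum
    exact ⟨hfwd w hw, hbwd w hw hsum⟩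
end
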